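/- The weight degradation function WD is smooth for κ > e^{−2}: the map (m,κ) ↦ WD(m,κ) = m² + (1−m)² + 2m(1−m)κ − (sup_{h ∈ [0,1]} s_{m,κ}(h))² is infinitely differentiable (C^∞) on the open set (0,1) × (e^{−2},1). -/

import Mathlib

open Real Set Filter Topology

noncomputable def s (m κ h : ℝ) : ℝ := m * κ ^ ((1 - h) ^ 2) + (1 - m) * κ ^ (h ^ 2)

noncomputable def WD (m κ : ℝ) : ℝ :=
  m ^ 2 + (1 - m) ^ 2 + 2 * m * (1 - m) * κ - (sSup (s m κ '' Set.Icc 0 1)) ^ 2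

/-- auxiliary "log-odds with κ-correction" function -/
noncomputable def aF (κ h : ℝ) : ℝ :=
  Real.log h - Real.log (1 - h) + (2 * h - 1) * Real.log κ

noncomputable def lgt (m : ℝ) : ℝ := Real.log m - Real.log (1 - m)

lemma log_mem {κ : ℝ} (hκ : κ ∈ Ioo (Real.exp (-2)) 1) :
    Real.log κ ∈ Ioo (-2 : ℝ) 0 := by
  have hpos : 0 < κ := lt_trans (Real.exp_pos _) hκ.1
  constructor
  · have := Real.log_lt_log (Real.exp_pos _) hκ.1
    simpa [Real.log_exp] using this
  · exact Real.log_neg hpos hκ.2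

lemma s_exp {m κ : ℝ} (hκ : 0 < κ) (x : ℝ) :
    s m κ x = m * Real.exp (Real.log κ * (1 - x) ^ 2)
      + (1 - m) * Real.exp (Real.log κ * x ^ 2) := by
  rw [s, Real.rpow_def_of_pos hκ, Real.rpow_def_of_pos hκ]

lemma hasDerivAt_sE (m L : ℝ) (x : ℝ) :
    HasDerivAt (fun x => m * Real.exp (L * (1 - x) ^ 2) + (1 - m) * Real.exp (L * x ^ 2))
      (2 * L * ((1 - m) * x * Real.exp (L * x ^ 2)
        - m * (1 - x) * Real.exp (L * (1 - x) ^ 2))) x := by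
  have h1 : HasDerivAt (fun x : ℝ => (1 - x) ^ 2) (-(2 * (1 - x))) x := by
    have := ((hasDerivAt_id x).const_sub 1).pow 2
    exact this.congr_deriv (by simp)
  have h2 : HasDerivAt (fun x : ℝ => x ^ 2) (2 * x) x := by
    exact ((hasDerivAt_id x).pow 2).congr_deriv (by simp)
  have e1 := ((h1.const_mul L).exp).const_mul m
  have e2 := ((h2.const_mul L).exp).const_mul (1 - m)
  exact (e1.add e2).congr_deriv (by ring)

lemma aF_strictMonoOn {κ : ℝ} (hκ : κ ∈ Ioo (Real.exp (-2)) 1) :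
    StrictMonoOn (aF κ) (Ioo 0 1) := by
  obtain ⟨hL1, hL2⟩ := log_mem hκ
  have hderiv : ∀ x ∈ Ioo (0:ℝ) 1,
      HasDerivAt (aF κ) (1 / x + 1 / (1 - x) + 2 * Real.log κ) x := by
    intro x hx
    have hx0 : x ≠ 0 := ne_of_gt hx.1
    have hx1 : (1 : ℝ) - x ≠ 0 := by have := hx.2; intro h; linarith [h]
    have d1 : HasDerivAt Real.log (1 / x) x := by simpa [one_div] using Real.hasDerivAt_log hx0
    have d2 : HasDerivAt (fun x : ℝ => Real.log (1 - x)) (1 / (1 - x) * (-1)) x := by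
      have inner : HasDerivAt (fun x : ℝ => 1 - x) (-1) x := by
        simpa using (hasDerivAt_id x).const_sub 1
      have := (Real.hasDerivAt_log hx1).comp x inner
      simpa [one_div, Function.comp_def] using this
    have d3 : HasDerivAt (fun x : ℝ => (2 * x - 1) * Real.log κ) (2 * Real.log κ) x := by
      have : HasDerivAt (fun x : ℝ => 2 * x - 1) 2 x := by
        simpa using ((hasDerivAt_id x).const_mul 2).sub_const 1
      simpa using this.mul_const (Real.log κ)
    have := (d1.sub d2).add d3
    exact this.congr_deriv (by ring)
  have hpos : ∀ x ∈ Ioo (0:ℝ) 1, 0 < 1 / x + 1 / (1 - x) + 2 * Real.log κ := by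
    intro x hx
    have h0 : 0 < x := hx.1
    have h1 : 0 < 1 - x := by linarith [hx.2]
    have e : 1 / x + 1 / (1 - x) = 1 / (x * (1 - x)) := by
      field_simp; ring
    have hle : x * (1 - x) ≤ 1 / 4 := by nlinarith [sq_nonneg (x - 1/2)]
    have h4 : (4 : ℝ) ≤ 1 / (x * (1 - x)) := by
      rw [le_div_iff₀ (by positivity)]
      linarith
    rw [e]
    linarith
  apply strictMonoOn_of_deriv_pos (convex_Ioo 0 1)
  · intro x hx
    exact (hderiv x hx).continuousAt.continuousWithinAt
  · intro x hx
    rw [interior_Ioo] at hx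
    rw [(hderiv x hx).deriv]
    exact hpos x hx

lemma bracket_lt {m κ x : ℝ} (hm : m ∈ Ioo (0:ℝ) 1) (hx : x ∈ Ioo (0:ℝ) 1)
    (h : aF κ x < lgt m) :
    (1 - m) * x * Real.exp (Real.log κ * x ^ 2)
      < m * (1 - x) * Real.exp (Real.log κ * (1 - x) ^ 2) := by
  have hm0 : 0 < m := hm.1
  have hm1 : 0 < 1 - m := by linarith [hm.2]
  have hx0 : 0 < x := hx.1
  have hx1 : 0 < 1 - x := by linarith [hx.2]
  have p1 : 0 < (1 - m) * x * Real.exp (Real.log κ * x ^ 2) := by positivity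
  have p2 : 0 < m * (1 - x) * Real.exp (Real.log κ * (1 - x) ^ 2) := by positivity
  rw [← Real.log_lt_log_iff p1 p2,
    Real.log_mul (by positivity) (Real.exp_ne_zero _),
    Real.log_mul (by positivity) (Real.exp_ne_zero _),
    Real.log_mul (ne_of_gt hm1) (ne_of_gt hx0),
    Real.log_mul (ne_of_gt hm0) (ne_of_gt hx1),
    Real.log_exp, Real.log_exp]
  rw [aF, lgt] at h
  nlinarith [h]

lemma bracket_gt {m κ x : ℝ} (hm : m ∈ Ioo (0:ℝ) 1) (hx : x ∈ Ioo (0:ℝ) 1)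
    (h : lgt m < aF κ x) :
    m * (1 - x) * Real.exp (Real.log κ * (1 - x) ^ 2)
      < (1 - m) * x * Real.exp (Real.log κ * x ^ 2) := by
  have hm0 : 0 < m := hm.1
  have hm1 : 0 < 1 - m := by linarith [hm.2]
  have hx0 : 0 < x := hx.1
  have hx1 : 0 < 1 - x := by linarith [hx.2]
  have p1 : 0 < (1 - m) * x * Real.exp (Real.log κ * x ^ 2) := by positivity
  have p2 : 0 < m * (1 - x) * Real.exp (Real.log κ * (1 - x) ^ 2) := by positivity
  rw [← Real.log_lt_log_iff p2 p1,
    Real.log_mul (by positivity) (Real.exp_ne_zero _),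
    Real.log_mul (by positivity) (Real.exp_ne_zero _),
    Real.log_mul (ne_of_gt hm1) (ne_of_gt hx0),
    Real.log_mul (ne_of_gt hm0) (ne_of_gt hx1),
    Real.log_exp, Real.log_exp]
  rw [aF, lgt] at h
  nlinarith [h]

lemma sSup_s_eq {m κ h : ℝ} (hm : m ∈ Ioo (0:ℝ) 1) (hκ : κ ∈ Ioo (Real.exp (-2)) 1)
    (hh : h ∈ Ioo (0:ℝ) 1) (heq : aF κ h = lgt m) :
    sSup (s m κ '' Icc 0 1) = s m κ h := by
  have hκpos : 0 < κ := lt_trans (Real.exp_pos _) hκ.1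
  obtain ⟨hL1, hL2⟩ := log_mem hκ
  set L := Real.log κ with hLdef
  have hfun : s m κ = fun x => m * Real.exp (L * (1 - x) ^ 2)
      + (1 - m) * Real.exp (L * x ^ 2) := funext fun x => s_exp hκpos x
  have hcont : Continuous (s m κ) := by
    rw [hfun]; continuity
  have hmono : MonotoneOn (s m κ) (Icc 0 h) := by
    apply (strictMonoOn_of_deriv_pos (convex_Icc 0 h)
      (hcont.continuousOn) ?_).monotoneOn
    intro x hx
    rw [interior_Icc] at hx
    have hx01 : x ∈ Ioo (0:ℝ) 1 := ⟨hx.1, lt_trans hx.2 hh.2⟩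
    have hax : aF κ x < lgt m := by
      rw [← heq]
      exact aF_strictMonoOn hκ hx01 hh hx.2
    have hbr := bracket_lt hm hx01 hax
    rw [hfun, (hasDerivAt_sE m L x).deriv]
    have : 2 * L < 0 := by linarith
    nlinarith
  have hanti : AntitoneOn (s m κ) (Icc h 1) := by
    apply (strictAntiOn_of_deriv_neg (convex_Icc h 1)
      (hcont.continuousOn) ?_).antitoneOn
    intro x hx
    rw [interior_Icc] at hx
    have hx01 : x ∈ Ioo (0:ℝ) 1 := ⟨lt_trans hh.1 hx.1, hx.2⟩
    have hax : lgt m < aF κ x := by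
      rw [← heq]
      exact aF_strictMonoOn hκ hh hx01 hx.1
    have hbr := bracket_gt hm hx01 hax
    rw [hfun, (hasDerivAt_sE m L x).deriv]
    have : 2 * L < 0 := by linarith
    nlinarith
  apply IsGreatest.csSup_eq
  constructor
  · exact mem_image_of_mem _ ⟨le_of_lt hh.1, le_of_lt hh.2⟩
  · rintro y ⟨x, hx, rfl⟩
    rcases le_total x h with hxle | hxge
    · exact hmono ⟨hx.1, hxle⟩ ⟨le_trans hx.1 hxle, le_rfl⟩ hxle
    · exact hanti ⟨le_rfl, le_of_lt hh.2⟩ ⟨hxge, hx.2⟩ hxge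

lemma exists_root {m κ : ℝ} (hm : m ∈ Ioo (0:ℝ) 1) (hκ : κ ∈ Ioo (Real.exp (-2)) 1) :
    ∃ h ∈ Ioo (0:ℝ) 1, aF κ h = lgt m := by
  obtain ⟨hL1, hL2⟩ := log_mem hκ
  set L := Real.log κ with hLdef
  set t := lgt m with htdef
  set u₁ := Real.exp (t - 2) with hu₁
  set u₂ := Real.exp (t + 2) with hu₂
  have hu₁pos : 0 < u₁ := Real.exp_pos _
  have hu₂pos : 0 < u₂ := Real.exp_pos _
  set h₁ := u₁ / (1 + u₁) with hh₁
  set h₂ := u₂ / (1 + u₂) with hh₂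
  have h₁mem : h₁ ∈ Ioo (0:ℝ) 1 := by
    constructor
    · positivity
    · rw [div_lt_one (by positivity)]; linarith
  have h₂mem : h₂ ∈ Ioo (0:ℝ) 1 := by
    constructor
    · positivity
    · rw [div_lt_one (by positivity)]; linarith
  have logit₁ : Real.log h₁ - Real.log (1 - h₁) = t - 2 := by
    have e1 : (1:ℝ) - h₁ = 1 / (1 + u₁) := by
      rw [hh₁]; field_simp; ring
    rw [hh₁, e1, Real.log_div (ne_of_gt hu₁pos) (by positivity),
      Real.log_div one_ne_zero (by positivity), Real.log_one, Real.log_exp]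
    ring
  have logit₂ : Real.log h₂ - Real.log (1 - h₂) = t + 2 := by
    have e1 : (1:ℝ) - h₂ = 1 / (1 + u₂) := by
      rw [hh₂]; field_simp; ring
    rw [hh₂, e1, Real.log_div (ne_of_gt hu₂pos) (by positivity),
      Real.log_div one_ne_zero (by positivity), Real.log_one, Real.log_exp]
    ring
  have hv₁ : aF κ h₁ < t := by
    rw [aF]
    have ha : -1 < 2 * h₁ - 1 := by linarith [h₁mem.1]
    have : (2 * h₁ - 1) * L < 2 := by nlinarith
    rw [← hLdef]
    linarith [logit₁]
  have hv₂ : t < aF κ h₂ := by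
    rw [aF]
    have ha : 2 * h₂ - 1 < 1 := by linarith [h₂mem.2]
    have : -2 < (2 * h₂ - 1) * L := by nlinarith
    rw [← hLdef]
    linarith [logit₂]
  have h₁₂ : h₁ < h₂ := by
    rw [hh₁, hh₂, div_lt_div_iff₀ (by positivity) (by positivity)]
    have : u₁ < u₂ := Real.exp_lt_exp.2 (by linarith)
    nlinarith
  have hcontOn : ContinuousOn (aF κ) (Icc h₁ h₂) := by
    intro x hx
    have hx0 : 0 < x := lt_of_lt_of_le h₁mem.1 hx.1
    have hx1 : x < 1 := lt_of_le_of_lt hx.2 h₂mem.2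
    apply ContinuousAt.continuousWithinAt
    have c1 : ContinuousAt Real.log x := Real.continuousAt_log (ne_of_gt hx0)
    have c2 : ContinuousAt (fun x : ℝ => Real.log (1 - x)) x :=
      (Real.continuousAt_log (by intro hc; linarith [hc])).comp
        ((continuous_const.sub continuous_id).continuousAt)
    have c3 : ContinuousAt (fun x : ℝ => (2 * x - 1) * Real.log κ) x := by fun_prop
    exact (c1.sub c2).add c3
  have := intermediate_value_Ioo (le_of_lt h₁₂) hcontOn
  obtain ⟨h, hmem, hval⟩ := this ⟨hv₁, hv₂⟩
  exact ⟨h, ⟨lt_trans h₁mem.1 hmem.1, lt_trans hmem.2 h₂mem.2⟩, hval⟩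

noncomputable def triEquiv (b d : ℝ) (hd : d ≠ 0) : (ℝ × ℝ) ≃L[ℝ] (ℝ × ℝ) :=
  LinearEquiv.toContinuousLinearEquiv
  { toFun := fun p => (p.1, b * p.1 + d * p.2)
    map_add' := by intro p q; simp [Prod.ext_iff]; ring
    map_smul' := by intro r p; simp [Prod.ext_iff, smul_eq_mul]; ring
    invFun := fun p => (p.1, (p.2 - b * p.1) / d)
    left_inv := by intro p; simp [Prod.ext_iff]; field_simp
    right_inv := by intro p; simp [Prod.ext_iff]; field_simp; ring }

theorem WD_smooth :
    ContDiffOn ℝ (⊤ : ℕ∞) (fun p : ℝ × ℝ => WD p.1 p.2)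
      (Set.Ioo (0 : ℝ) 1 ×ˢ Set.Ioo (Real.exp (-2)) 1) := by
  rintro ⟨m₀, κ₀⟩ hp₀
  apply ContDiffAt.contDiffWithinAt
  obtain ⟨hm₀, hκ₀⟩ := hp₀
  obtain ⟨h₀, hh₀, heq₀⟩ := exists_root hm₀ hκ₀
  have hκpos : 0 < κ₀ := lt_trans (Real.exp_pos _) hκ₀.1
  have hκ0 : κ₀ ≠ 0 := ne_of_gt hκpos
  have hh0 : h₀ ≠ 0 := ne_of_gt hh₀.1
  have hh1 : (1 : ℝ) - h₀ ≠ 0 := by have := hh₀.2; intro hc; linarith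
  have hm0 : m₀ ≠ 0 := ne_of_gt hm₀.1
  have hm1 : (1 : ℝ) - m₀ ≠ 0 := by have := hm₀.2; intro hc; linarith
  obtain ⟨hL1, hL2⟩ := log_mem hκ₀
  set q₀ : ℝ × ℝ := (κ₀, h₀) with hq₀
  set Φ : ℝ × ℝ → ℝ × ℝ := fun q => (q.1, aF q.1 q.2) with hΦdef
  set b : ℝ := (2 * h₀ - 1) / κ₀ with hbdef
  set d : ℝ := 1 / h₀ + 1 / (1 - h₀) + 2 * Real.log κ₀ with hddef
  have hdpos : 0 < d := by
    have e : 1 / h₀ + 1 / (1 - h₀) = 1 / (h₀ * (1 - h₀)) := by field_simp; ring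
    have hle : h₀ * (1 - h₀) ≤ 1 / 4 := by nlinarith [sq_nonneg (h₀ - 1/2)]
    have h4 : (4 : ℝ) ≤ 1 / (h₀ * (1 - h₀)) := by
      rw [le_div_iff₀ (by nlinarith [hh₀.1, hh₀.2])]
      linarith
    rw [hddef, e]
    linarith
  have hdne : d ≠ 0 := ne_of_gt hdpos
  set E := triEquiv b d hdne with hEdef
  -- derivative of Φ
  have dlog2 : HasFDerivAt (fun q : ℝ × ℝ => Real.log q.2)
      (h₀⁻¹ • ContinuousLinearMap.snd ℝ ℝ ℝ) q₀ :=
    (Real.hasDerivAt_log (x := q₀.2) hh0).comp_hasFDerivAt q₀ hasFDerivAt_snd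
  have dlog2' : HasFDerivAt (fun q : ℝ × ℝ => Real.log (1 - q.2))
      ((1 - h₀)⁻¹ • ((0 : (ℝ × ℝ) →L[ℝ] ℝ) - ContinuousLinearMap.snd ℝ ℝ ℝ)) q₀ := by
    have inner : HasFDerivAt (fun q : ℝ × ℝ => 1 - q.2)
        ((0 : (ℝ × ℝ) →L[ℝ] ℝ) - ContinuousLinearMap.snd ℝ ℝ ℝ) q₀ :=
      (hasFDerivAt_const (1:ℝ) q₀).sub hasFDerivAt_snd
    exact (Real.hasDerivAt_log hh1).comp_hasFDerivAt q₀ inner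
  have du : HasFDerivAt (fun q : ℝ × ℝ => 2 * q.2 - 1)
      ((2:ℝ) • ContinuousLinearMap.snd ℝ ℝ ℝ) q₀ :=
    (hasFDerivAt_snd.const_mul 2).sub_const 1
  have dv : HasFDerivAt (fun q : ℝ × ℝ => Real.log q.1)
      (κ₀⁻¹ • ContinuousLinearMap.fst ℝ ℝ ℝ) q₀ :=
    (Real.hasDerivAt_log (x := q₀.1) hκ0).comp_hasFDerivAt q₀ hasFDerivAt_fst
  have hA : HasFDerivAt (fun q : ℝ × ℝ => aF q.1 q.2)
      ((h₀⁻¹ • ContinuousLinearMap.snd ℝ ℝ ℝ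
        - (1 - h₀)⁻¹ • ((0 : (ℝ × ℝ) →L[ℝ] ℝ) - ContinuousLinearMap.snd ℝ ℝ ℝ))
        + ((2 * h₀ - 1) • (κ₀⁻¹ • ContinuousLinearMap.fst ℝ ℝ ℝ)
          + Real.log κ₀ • ((2:ℝ) • ContinuousLinearMap.snd ℝ ℝ ℝ))) q₀ := by
    have := (dlog2.sub dlog2').add (du.mul dv)
    exact this
  have hΦ' : HasFDerivAt Φ (E : (ℝ × ℝ) →L[ℝ] (ℝ × ℝ)) q₀ := by
    refine (hasFDerivAt_fst.prodMk hA).congr_fderiv ?_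
    refine ContinuousLinearMap.ext fun q => ?_
    obtain ⟨x, yy⟩ := q
    have hE : (E : (ℝ × ℝ) →L[ℝ] (ℝ × ℝ)) (x, yy) = (x, b * x + d * yy) := rfl
    rw [hE]
    refine Prod.ext ?_ ?_
    · simp
    · show h₀⁻¹ * yy - (1 - h₀)⁻¹ * (0 - yy)
        + ((2 * h₀ - 1) * (κ₀⁻¹ * x) + Real.log κ₀ * (2 * yy)) = b * x + d * yy
      rw [hbdef, hddef]
      field_simp
      ring
  -- smoothness of Φ
  have hΦcd : ContDiffAt ℝ (⊤ : ℕ∞) Φ q₀ := by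
    refine contDiff_fst.contDiffAt.prodMk ?_
    have c1 : ContDiffAt ℝ (⊤ : ℕ∞) (fun q : ℝ × ℝ => Real.log q.2) q₀ :=
      (Real.contDiffAt_log.2 hh0).comp q₀ contDiff_snd.contDiffAt
    have c2 : ContDiffAt ℝ (⊤ : ℕ∞) (fun q : ℝ × ℝ => Real.log (1 - q.2)) q₀ :=
      (Real.contDiffAt_log.2 hh1).comp q₀ (contDiff_const.sub contDiff_snd).contDiffAt
    have c3 : ContDiffAt ℝ (⊤ : ℕ∞) (fun q : ℝ × ℝ => (2 * q.2 - 1) * Real.log q.1) q₀ := by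
      refine ContDiffAt.mul ?_ ?_
      · exact ((contDiff_const.mul contDiff_snd).sub contDiff_const).contDiffAt
      · exact (Real.contDiffAt_log.2 hκ0).comp q₀ contDiff_fst.contDiffAt
    exact (c1.sub c2).add c3
  have hle : ((⊤ : ℕ∞) : WithTop ℕ∞) ≠ 0 := by simp
  set inv := hΦcd.localInverse hΦ' hle with hinvdef
  have hinvcd : ContDiffAt ℝ (⊤ : ℕ∞) inv (Φ q₀) := hΦcd.to_localInverse hΦ' hle
  have hri : ∀ᶠ y in 𝓝 (Φ q₀), Φ (inv y) = y :=
    (hΦcd.hasStrictFDerivAt' hΦ' hle).eventually_right_inverse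
  have hfix : inv (Φ q₀) = q₀ := hΦcd.localInverse_apply_image hΦ' hle
  set y : ℝ × ℝ → ℝ × ℝ := fun p => (p.2, lgt p.1) with hydef
  have hy0 : y (m₀, κ₀) = Φ q₀ := by
    simp only [hydef, hΦdef, hq₀]
    exact Prod.ext rfl heq₀.symm
  have hycd : ContDiffAt ℝ (⊤ : ℕ∞) y (m₀, κ₀) := by
    refine contDiff_snd.contDiffAt.prodMk ?_
    refine ContDiffAt.sub ?_ ?_
    · exact (Real.contDiffAt_log.2 hm0).comp (m₀, κ₀) contDiff_fst.contDiffAt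
    · exact ContDiffAt.comp (g := Real.log) (f := fun p : ℝ × ℝ => 1 - p.1) (m₀, κ₀)
        (Real.contDiffAt_log.2 hm1) ((contDiff_const.sub contDiff_fst).contDiffAt)
  set H : ℝ × ℝ → ℝ := fun p => (inv (y p)).2 with hHdef
  have hHcd : ContDiffAt ℝ (⊤ : ℕ∞) H (m₀, κ₀) := by
    refine contDiff_snd.contDiffAt.comp _ (ContDiffAt.comp _ ?_ hycd)
    rw [hy0]
    exact hinvcd
  have hHp0 : H (m₀, κ₀) = h₀ := by
    simp only [hHdef, hy0, hfix]; rfl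
  -- eventual equality
  have hev1 : ∀ᶠ p in 𝓝 (m₀, κ₀) , Φ (inv (y p)) = y p := by
    have hyt : Tendsto y (𝓝 (m₀, κ₀)) (𝓝 (Φ q₀)) := by
      rw [← hy0]; exact hycd.continuousAt
    exact hyt.eventually hri
  have hev2 : ∀ᶠ p in 𝓝 (m₀, κ₀), H p ∈ Ioo (0:ℝ) 1 := by
    have := hHcd.continuousAt.preimage_mem_nhds (isOpen_Ioo.mem_nhds (hHp0 ▸ hh₀))
    exact eventually_of_mem this (fun p hp => hp)
  have hev3 : ∀ᶠ p in 𝓝 (m₀, κ₀), p ∈ Ioo (0:ℝ) 1 ×ˢ Ioo (Real.exp (-2)) 1 :=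
    eventually_of_mem (((isOpen_Ioo).prod isOpen_Ioo).mem_nhds ⟨hm₀, hκ₀⟩) (fun p hp => hp)
  have hevWD : (fun p : ℝ × ℝ => WD p.1 p.2) =ᶠ[𝓝 (m₀, κ₀)]
      fun p => p.1 ^ 2 + (1 - p.1) ^ 2 + 2 * p.1 * (1 - p.1) * p.2
        - (s p.1 p.2 (H p)) ^ 2 := by
    filter_upwards [hev1, hev2, hev3] with p h1 h2 h3
    have e1 : (inv (y p)).1 = p.2 := congrArg Prod.fst h1
    have e2 : aF (inv (y p)).1 (inv (y p)).2 = lgt p.1 := congrArg Prod.snd h1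
    rw [e1] at e2
    have := sSup_s_eq h3.1 h3.2 h2 e2
    rw [WD, this]
  -- smoothness of the local formula
  have hr1 : ContDiffAt ℝ (⊤ : ℕ∞) (fun p : ℝ × ℝ => p.2 ^ ((1 - H p) ^ 2)) (m₀, κ₀) := by
    have inner : ContDiffAt ℝ (⊤ : ℕ∞) (fun p : ℝ × ℝ => (p.2, (1 - H p) ^ 2)) (m₀, κ₀) :=
      contDiff_snd.contDiffAt.prodMk (((contDiffAt_const (c := (1:ℝ))).sub hHcd).pow 2)
    have outer := Real.contDiffAt_rpow_of_ne
      ((fun p : ℝ × ℝ => (p.2, (1 - H p) ^ 2)) (m₀, κ₀)) (by exact hκ0) (n := (⊤ : ℕ∞))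
    exact ContDiffAt.comp (g := fun q : ℝ × ℝ => q.1 ^ q.2)
      (f := fun p : ℝ × ℝ => (p.2, (1 - H p) ^ 2)) (m₀, κ₀) outer inner
  have hr2 : ContDiffAt ℝ (⊤ : ℕ∞) (fun p : ℝ × ℝ => p.2 ^ ((H p) ^ 2)) (m₀, κ₀) := by
    have inner : ContDiffAt ℝ (⊤ : ℕ∞) (fun p : ℝ × ℝ => (p.2, (H p) ^ 2)) (m₀, κ₀) :=
      contDiff_snd.contDiffAt.prodMk (hHcd.pow 2)
    have outer := Real.contDiffAt_rpow_of_ne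
      ((fun p : ℝ × ℝ => (p.2, (H p) ^ 2)) (m₀, κ₀)) (by exact hκ0) (n := (⊤ : ℕ∞))
    exact ContDiffAt.comp (g := fun q : ℝ × ℝ => q.1 ^ q.2)
      (f := fun p : ℝ × ℝ => (p.2, (H p) ^ 2)) (m₀, κ₀) outer inner
  have hRHS : ContDiffAt ℝ (⊤ : ℕ∞) (fun p : ℝ × ℝ =>
      p.1 ^ 2 + (1 - p.1) ^ 2 + 2 * p.1 * (1 - p.1) * p.2
        - (s p.1 p.2 (H p)) ^ 2) (m₀, κ₀) := by
    have hpoly : ContDiffAt ℝ (⊤ : ℕ∞) (fun p : ℝ × ℝ =>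
        p.1 ^ 2 + (1 - p.1) ^ 2 + 2 * p.1 * (1 - p.1) * p.2) (m₀, κ₀) := by
      fun_prop
    have hs : ContDiffAt ℝ (⊤ : ℕ∞) (fun p : ℝ × ℝ => s p.1 p.2 (H p)) (m₀, κ₀) := by
      have : (fun p : ℝ × ℝ => s p.1 p.2 (H p))
          = fun p : ℝ × ℝ => p.1 * p.2 ^ ((1 - H p) ^ 2)
            + (1 - p.1) * p.2 ^ ((H p) ^ 2) := rfl
      rw [this]
      exact (contDiff_fst.contDiffAt.mul hr1).add
        ((contDiffAt_const.sub contDiff_fst.contDiffAt).mul hr2)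
    exact hpoly.sub (hs.pow 2)
  exact hRHS.congr_of_eventuallyEq hevWD
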